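/- arXiv:gr-qc/0504002 — 6 statements merged into one kernel-verified Lean document; each statement's English description precedes it below -/
import Mathlib

section
/- Let θ : ℝ → ℝ be continuous on [0,1], let A(λ) = exp(∫₀^λ θ(μ) dμ) be the associated area-decreasing factor, and let s : ℝ → ℝ be continuous on [0,1]. If s(λ) ≤ -θ(λ)/4 for every λ ∈ [0,1], then ∫₀¹ s(λ)·A(λ) dλ ≤ (1/4)·(1 - A(1)). -/
/-!
Since `A' = θ A` with `A > 0` and `A 0 = 1`, the pointwise bound `s ≤ -θ/4` gives
`∫₀¹ s A ≤ -¼ ∫₀¹ θ A = -¼ (A 1 - 1)` by the fundamental theorem of calculus.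
-/

open Set intervalIntegral Real

section ExpPrimitive

variable {f : ℝ → ℝ} {a b : ℝ}

theorem continuousOn_exp_primitive (hab : a ≤ b) (hf : ContinuousOn f (Icc a b)) :
    ContinuousOn (fun x => exp (∫ t in a..x, f t)) (Icc a b) := by
  rw [← uIcc_of_le hab] at hf ⊢
  exact (continuousOn_primitive_interval (hf.integrableOn_compact isCompact_uIcc)).rexp

theorem hasDerivAt_exp_primitive (hf : ContinuousOn f (Icc a b)) {x : ℝ} (hx : x ∈ Ioo a b) :
    HasDerivAt (fun x => exp (∫ t in a..x, f t)) (f x * exp (∫ t in a..x, f t)) x := by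
  have hF : HasDerivAt (fun u => ∫ t in a..u, f t) (f x) x :=
    integral_hasDerivAt_right
      ((hf.mono (Icc_subset_Icc le_rfl hx.2.le)).intervalIntegrable_of_Icc hx.1.le)
      ((hf.mono Ioo_subset_Icc_self).stronglyMeasurableAtFilter isOpen_Ioo x hx)
      (hf.continuousAt (Icc_mem_nhds hx.1 hx.2))
  simpa only [mul_comm] using hF.exp

theorem integral_mul_exp_primitive (hab : a ≤ b) (hf : ContinuousOn f (Icc a b)) :
    ∫ x in a..b, f x * exp (∫ t in a..x, f t) = exp (∫ t in a..b, f t) - 1 := by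
  rw [integral_eq_sub_of_hasDerivAt_of_le hab (continuousOn_exp_primitive hab hf)
    (fun x hx => hasDerivAt_exp_primitive hf hx)
    ((hf.mul (continuousOn_exp_primitive hab hf)).intervalIntegrable_of_Icc hab)]
  simp

end ExpPrimitive

/-- Single-generator sufficiency direction of Proposition 1: if the entropy
density satisfies `s ≤ -θ/4` on `[0,1]`, then the entropy flux through the
light sheet is bounded by one quarter of the area decrease. -/
theorem generalized_entropy_bound_single_generator
    (θ s : ℝ → ℝ)
    (hθ : ContinuousOn θ (Icc 0 1))
    (hs : ContinuousOn s (Icc 0 1))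
    (A : ℝ → ℝ)
    (hA : ∀ l : ℝ, A l = Real.exp (∫ μ in (0:ℝ)..l, θ μ))
    (hcond : ∀ l ∈ Icc (0:ℝ) 1, s l ≤ -θ l / 4) :
    (∫ l in (0:ℝ)..1, s l * A l) ≤ (1/4) * (1 - A 1) := by
  obtain rfl : A = fun l => exp (∫ μ in (0:ℝ)..l, θ μ) := funext hA
  have hA_cont := continuousOn_exp_primitive zero_le_one hθ
  calc (∫ l in (0:ℝ)..1, s l * exp (∫ μ in (0:ℝ)..l, θ μ))
      ≤ ∫ l in (0:ℝ)..1, -(1/4) * (θ l * exp (∫ μ in (0:ℝ)..l, θ μ)) := by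
        refine integral_mono_on zero_le_one
          ((hs.mul hA_cont).intervalIntegrable_of_Icc zero_le_one)
          ((continuousOn_const.mul (hθ.mul hA_cont)).intervalIntegrable_of_Icc zero_le_one)
          fun l hl => ?_
        have := mul_le_mul_of_nonneg_right (hcond l hl) (exp_pos (∫ μ in (0:ℝ)..l, θ μ)).le
        linarith
    _ = (1/4) * (1 - exp (∫ μ in (0:ℝ)..1, θ μ)) := by
        rw [integral_const_mul, integral_mul_exp_primitive zero_le_one hθ]
        ring
end

section
/- Let ε > 0, let θ, s : ℝ → ℝ be continuous on [0, ε), and let A(λ) = exp(∫₀^λ θ(μ) dμ) be the associated area-decreasing factor. If for every Δ ∈ (0, ε) one has ∫₀^Δ s(λ)·A(λ) dλ ≤ (1/4)·(1 - A(Δ)), then s(0) ≤ -θ(0)/4. -/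
open Set Filter Topology intervalIntegral

/-!
Set `F(Δ) = ∫₀^Δ s·A - (1 - A(Δ))/4`. Then `F(0) = 0` and `F ≤ 0` on `(0, ε)`, so the right
derivative of `F` at `0` is nonpositive. Since `A(0) = 1` and `A'(0) = θ(0)`, the fundamental
theorem of calculus gives `F'(0) = s(0) + θ(0)/4`.
-/

theorem HasDerivWithinAt.nonpos_of_eventually_le {f : ℝ → ℝ} {f' a : ℝ}
    (hf : HasDerivWithinAt f f' (Ici a) a) (hle : ∀ᶠ x in 𝓝[>] a, f x ≤ f a) : f' ≤ 0 := by
  have hslope := hasDerivWithinAt_iff_tendsto_slope.1 hf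
  rw [Ici_sdiff_left] at hslope
  refine le_of_tendsto hslope ?_
  filter_upwards [hle, self_mem_nhdsWithin] with x hx hax
  rw [slope_def_field]
  exact div_nonpos_of_nonpos_of_nonneg (sub_nonpos.2 hx) (sub_nonneg.2 (le_of_lt hax))

section Primitive

variable {E : Type*} [NormedAddCommGroup E] [NormedSpace ℝ E] {f : ℝ → E} {a b : ℝ}

theorem ContinuousOn.continuousOn_primitive_Ico (hf : ContinuousOn f (Ico a b)) :
    ContinuousOn (fun x => ∫ t in a..x, f t) (Ico a b) := by
  intro x hx
  obtain ⟨c, hxc, hcb⟩ := exists_between hx.2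
  have hac : a ≤ c := hx.1.trans hxc.le
  have hIcc : ContinuousOn (fun x => ∫ t in a..x, f t) (Icc a c) := by
    rw [← uIcc_of_le hac]
    exact continuousOn_primitive_interval <| by
      rw [uIcc_of_le hac]; exact (hf.mono (Icc_subset_Ico_right hcb)).integrableOn_Icc
  have hmem : Icc a c ∈ 𝓝[Ico a b] x :=
    mem_nhdsWithin.2 ⟨Iio c, isOpen_Iio, hxc, fun y hy => ⟨hy.2.1, le_of_lt hy.1⟩⟩
  exact (hIcc x ⟨hx.1, le_of_lt hxc⟩).mono_of_mem_nhdsWithin hmem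

theorem ContinuousOn.hasDerivWithinAt_integral_Ici [CompleteSpace E] (hab : a < b)
    (hf : ContinuousOn f (Ico a b)) :
    HasDerivWithinAt (fun x => ∫ t in a..x, f t) (f a) (Ici a) a := by
  have hmem : Ico a b ∈ 𝓝[>] a := Ico_mem_nhdsGT hab
  exact integral_hasDerivWithinAt_right IntervalIntegrable.refl
    ⟨Ico a b, hmem, hf.aestronglyMeasurable measurableSet_Ico⟩
    ((hf a (left_mem_Ico.2 hab)).mono_of_mem_nhdsWithin hmem)

end Primitive

/-- Necessity direction of Proposition 1 in local single-generator form: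
if the generalized covariant entropy bound holds for all arbitrarily short
light sheets starting at a point, then `s(0) ≤ -θ(0)/4`. -/
theorem entropy_bound_necessity_local
    (ε : ℝ) (hε : 0 < ε)
    (θ s : ℝ → ℝ)
    (hθ : ContinuousOn θ (Ico 0 ε))
    (hs : ContinuousOn s (Ico 0 ε))
    (A : ℝ → ℝ)
    (hA : ∀ l : ℝ, A l = Real.exp (∫ μ in (0:ℝ)..l, θ μ))
    (hbound : ∀ Δ ∈ Ioo (0:ℝ) ε,
      (∫ l in (0:ℝ)..Δ, s l * A l) ≤ (1/4) * (1 - A Δ)) :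
    s 0 ≤ -θ 0 / 4 := by
  have hA_eq : A = fun l => Real.exp (∫ μ in (0:ℝ)..l, θ μ) := funext hA
  have hA0 : A 0 = 1 := by simp [hA_eq]
  have hA_cont : ContinuousOn A (Ico 0 ε) :=
    hA_eq ▸ Real.continuous_exp.comp_continuousOn hθ.continuousOn_primitive_Ico
  have hA_deriv : HasDerivWithinAt A (θ 0) (Ici 0) 0 := by
    simpa [hA_eq] using (hθ.hasDerivWithinAt_integral_Ici hε).exp
  have hentropy_deriv :
      HasDerivWithinAt (fun Δ => ∫ l in (0:ℝ)..Δ, s l * A l) (s 0) (Ici 0) 0 := by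
    simpa [hA0] using (hs.mul hA_cont).hasDerivWithinAt_integral_Ici hε
  have hF_deriv := hentropy_deriv.sub ((hA_deriv.const_sub 1).const_mul (1/4))
  have hF_nonpos : s 0 - 1/4 * -θ 0 ≤ 0 := by
    refine hF_deriv.nonpos_of_eventually_le ?_
    filter_upwards [Ioo_mem_nhdsGT hε] with Δ hΔ
    simpa [hA0] using hbound Δ hΔ
  linarith
end

section
/- Let G : ℝ → ℝ be twice continuously differentiable on [0,1] with G(λ) > 0 for all λ ∈ [0,1], let s : ℝ → ℝ be continuously differentiable on [0,1], and let T : ℝ → ℝ. Assume: (a) G''(λ) ≤ -4π·T(λ)·G(λ) for all λ ∈ [0,1]; (b) s'(λ) ≤ 2π·T(λ) for all λ ∈ [0,1]; and (c) s(0) ≤ -G'(0)/(2·G(0)). Then s(λ) ≤ -G'(λ)/(2·G(λ)) for all λ ∈ [0,1]. -/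
open Set

/-! With `u = G'/(2G)` (so `u = θ/4`), the Raychaudhuri inequality (a) gives the Riccati
inequality `u' = G''/(2G) - 2u² ≤ -2πT - 2u²`, and with (b) the sum `s + u` has derivative
`≤ -2u² ≤ 0`. Hence `s + u` is antitone on `[0,1]` and stays below its initial value, which is
`≤ 0` by (c). -/

theorem antitoneOn_of_hasDerivAt_nonpos {D : Set ℝ} (hD : Convex ℝ D) {f f' : ℝ → ℝ}
    (hf : ∀ x ∈ D, HasDerivAt f (f' x) x) (hf'₀ : ∀ x ∈ D, f' x ≤ 0) : AntitoneOn f D :=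
  antitoneOn_of_hasDerivWithinAt_nonpos hD
    (fun x hx ↦ (hf x hx).continuousAt.continuousWithinAt)
    (fun x hx ↦ (hf x (interior_subset hx)).hasDerivWithinAt)
    (fun x hx ↦ hf'₀ x (interior_subset hx))

theorem hasDerivAt_div_two_mul {G G' : ℝ → ℝ} {g'' l : ℝ}
    (hG : HasDerivAt G (G' l) l) (hG' : HasDerivAt G' g'' l) (hG₀ : G l ≠ 0) :
    HasDerivAt (fun x ↦ G' x / (2 * G x)) (g'' / (2 * G l) - 2 * (G' l / (2 * G l)) ^ 2) l := by
  refine (hG'.div (hG.const_mul 2) (mul_ne_zero two_ne_zero hG₀)).congr_deriv ?_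
  field_simp

theorem strominger_thompson_remark_general
    (G G' G'' s s' T : ℝ → ℝ)
    (hGpos : ∀ l ∈ Icc (0:ℝ) 1, 0 < G l)
    (hG' : ∀ l ∈ Icc (0:ℝ) 1, HasDerivAt G (G' l) l)
    (hG'' : ∀ l ∈ Icc (0:ℝ) 1, HasDerivAt G' (G'' l) l)
    (hs' : ∀ l ∈ Icc (0:ℝ) 1, HasDerivAt s (s' l) l)
    (ha : ∀ l ∈ Icc (0:ℝ) 1, G'' l ≤ -(4 * Real.pi) * T l * G l)
    (hb : ∀ l ∈ Icc (0:ℝ) 1, s' l ≤ 2 * Real.pi * T l)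
    (hc : s 0 ≤ -G' 0 / (2 * G 0)) :
    ∀ l ∈ Icc (0:ℝ) 1, s l ≤ -G' l / (2 * G l) := by
  set u : ℝ → ℝ := fun l ↦ G' l / (2 * G l)
  have hanti : AntitoneOn (s + u) (Icc 0 1) := by
    refine antitoneOn_of_hasDerivAt_nonpos (convex_Icc 0 1)
      (f' := fun l ↦ s' l + (G'' l / (2 * G l) - 2 * u l ^ 2)) (fun l hl ↦ ?_) (fun l hl ↦ ?_)
    · exact (hs' l hl).add
        (hasDerivAt_div_two_mul (hG' l hl) (hG'' l hl) (hGpos l hl).ne')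
    · have hraychaudhuri : G'' l / (2 * G l) ≤ -(2 * Real.pi * T l) := by
        rw [div_le_iff₀ (by linarith [hGpos l hl])]
        linarith [ha l hl]
      linarith [hb l hl, sq_nonneg (u l)]
  intro l hl
  have h0 : (0:ℝ) ∈ Icc (0:ℝ) 1 := ⟨le_rfl, zero_le_one⟩
  have hdecr : s l + u l ≤ s 0 + u 0 := hanti h0 hl hl.1
  simp only [u, neg_div] at hdecr hc ⊢
  linarith

/-- The paper's Remark on the Strominger–Thompson conditions: with
`G = √A` (so `θ = 2G'/G`), conditions (a) `G'' ≤ -4πTG` (Raychaudhuri +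
Einstein), (b) `s' ≤ 2πT` and (c) `s(0) ≤ -G'(0)/(2G(0))` imply
`s ≤ -G'/(2G)` on the whole light sheet `[0,1]`. -/
theorem strominger_thompson_remark
    (G G' G'' s s' T : ℝ → ℝ)
    (hGpos : ∀ l ∈ Icc (0:ℝ) 1, 0 < G l)
    (hG' : ∀ l ∈ Icc (0:ℝ) 1, HasDerivAt G (G' l) l)
    (hG'' : ∀ l ∈ Icc (0:ℝ) 1, HasDerivAt G' (G'' l) l)
    (hG''cont : ContinuousOn G'' (Icc 0 1))
    (hs' : ∀ l ∈ Icc (0:ℝ) 1, HasDerivAt s (s' l) l)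
    (hs'cont : ContinuousOn s' (Icc 0 1))
    (ha : ∀ l ∈ Icc (0:ℝ) 1, G'' l ≤ -(4 * Real.pi) * T l * G l)
    (hb : ∀ l ∈ Icc (0:ℝ) 1, s' l ≤ 2 * Real.pi * T l)
    (hc : s 0 ≤ -G' 0 / (2 * G 0)) :
    ∀ l ∈ Icc (0:ℝ) 1, s l ≤ -G' l / (2 * G l) :=
  strominger_thompson_remark_general G G' G'' s s' T hGpos hG' hG'' hs' ha hb hc
end

section
/- Let G : ℝ → ℝ be twice continuously differentiable on [0,1] with G(λ) > 0 for all λ ∈ [0,1] and G(0) = 1, let s : ℝ → ℝ be continuously differentiable on [0,1], and let T : ℝ → ℝ. Assume: (a) G''(λ) ≤ -4π·T(λ)·G(λ) for all λ ∈ [0,1]; (b) s'(λ) ≤ 2π·T(λ) for all λ ∈ [0,1]; and (c) s(0) ≤ -G'(0)/(2·G(0)). Then ∫₀¹ s(λ)·G(λ)² dλ ≤ (1/4)·(1 - G(1)²). -/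
/-!
Write `θ = 2G'/G` for the expansion. By (a), `-θ/4` grows at least at rate `2πT`:
its derivative is `-G''/(2G) + θ²/8 ≥ 2πT`. By (b) the entropy density `s` grows at most at
that rate, and by (c) it starts below `-θ/4`, so `s ≤ -θ/4` along the whole generator.
Since `-θ G²/4 = -G G'/2` is the derivative of `-G²/4`, integrating against `G² > 0`
gives `∫₀¹ s G² ≤ (G(0)² - G(1)²)/4`.
-/

open Set intervalIntegral

/-- The expansion `θ = A'/A` of the area factor `A = G²`. -/
noncomputable def expansion (G G' : ℝ → ℝ) (l : ℝ) : ℝ := 2 * G' l / G l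

theorem hasDerivAt_expansion {G G' : ℝ → ℝ} {G'' l : ℝ} (hG : HasDerivAt G (G' l) l)
    (hG' : HasDerivAt G' G'' l) (hGl : G l ≠ 0) :
    HasDerivAt (expansion G G') (2 * G'' / G l - expansion G G' l ^ 2 / 2) l := by
  refine ((hG'.const_mul 2).div hG hGl).congr_deriv ?_
  unfold expansion
  field_simp

theorem le_neg_deriv_expansion_div_four {g g'' t θ : ℝ} (hg : 0 < g)
    (ha : g'' ≤ -(4 * Real.pi) * t * g) :
    2 * Real.pi * t ≤ -(2 * g'' / g - θ ^ 2 / 2) / 4 := by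
  have h : 2 * Real.pi * t ≤ -g'' / (2 * g) := by
    rw [le_div_iff₀ (by positivity)]
    linarith
  calc 2 * Real.pi * t ≤ -g'' / (2 * g) + θ ^ 2 / 8 := by linarith [sq_nonneg θ]
    _ = -(2 * g'' / g - θ ^ 2 / 2) / 4 := by field_simp; ring

theorem le_neg_expansion_div_four {G G' G'' s s' T : ℝ → ℝ} {a b : ℝ}
    (hGpos : ∀ l ∈ Icc a b, 0 < G l)
    (hG'd : ∀ l ∈ Icc a b, HasDerivAt G (G' l) l)
    (hG''d : ∀ l ∈ Icc a b, HasDerivAt G' (G'' l) l)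
    (hs'd : ∀ l ∈ Icc a b, HasDerivAt s (s' l) l)
    (ha : ∀ l ∈ Icc a b, G'' l ≤ -(4 * Real.pi) * T l * G l)
    (hb : ∀ l ∈ Icc a b, s' l ≤ 2 * Real.pi * T l)
    (hc : s a ≤ -expansion G G' a / 4) :
    ∀ l ∈ Icc a b, s l ≤ -expansion G G' l / 4 := by
  have hθ : ∀ l ∈ Icc a b, HasDerivAt (fun l => -expansion G G' l / 4)
      (-(2 * G'' l / G l - expansion G G' l ^ 2 / 2) / 4) l := fun l hl =>
    ((hasDerivAt_expansion (hG'd l hl) (hG''d l hl) (hGpos l hl).ne').neg).div_const 4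
  exact image_le_of_deriv_right_le_deriv_boundary
    (fun l hl => (hs'd l hl).continuousAt.continuousWithinAt)
    (fun l hl => (hs'd l (Ico_subset_Icc_self hl)).hasDerivWithinAt) hc
    (fun l hl => (hθ l hl).continuousAt.continuousWithinAt)
    (fun l hl => (hθ l (Ico_subset_Icc_self hl)).hasDerivWithinAt)
    (fun l hl => (hb l (Ico_subset_Icc_self hl)).trans
      (le_neg_deriv_expansion_div_four (hGpos l (Ico_subset_Icc_self hl))
        (ha l (Ico_subset_Icc_self hl))))

theorem integral_neg_expansion_div_four_mul_sq {G G' : ℝ → ℝ} {a b : ℝ}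
    (hG : ∀ l ∈ uIcc a b, G l ≠ 0)
    (hG'd : ∀ l ∈ uIcc a b, HasDerivAt G (G' l) l) (hG'c : ContinuousOn G' (uIcc a b)) :
    ∫ l in a..b, -expansion G G' l / 4 * G l ^ 2 = (G a ^ 2 - G b ^ 2) / 4 := by
  have hGc : ContinuousOn G (uIcc a b) := HasDerivAt.continuousOn hG'd
  calc ∫ l in a..b, -expansion G G' l / 4 * G l ^ 2
      = ∫ l in a..b, -(G l * G' l) / 2 := integral_congr fun l hl => by
        unfold expansion
        field_simp [hG l hl]
        ring
    _ = -G b ^ 2 / 4 - -G a ^ 2 / 4 :=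
        integral_eq_sub_of_hasDerivAt
          (fun l hl => (((hG'd l hl).pow 2).neg.div_const 4).congr_deriv (by norm_num; ring))
          ((hGc.mul hG'c).neg.div_const 2).intervalIntegrable
    _ = (G a ^ 2 - G b ^ 2) / 4 := by ring

theorem strominger_thompson_entropy_bound_general
    (G G' G'' s s' T : ℝ → ℝ)
    (hGpos : ∀ l ∈ Icc (0:ℝ) 1, 0 < G l)
    (hG0 : G 0 = 1)
    (hG'd : ∀ l ∈ Icc (0:ℝ) 1, HasDerivAt G (G' l) l)
    (hG''d : ∀ l ∈ Icc (0:ℝ) 1, HasDerivAt G' (G'' l) l)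
    (hs'd : ∀ l ∈ Icc (0:ℝ) 1, HasDerivAt s (s' l) l)
    (ha : ∀ l ∈ Icc (0:ℝ) 1, G'' l ≤ -(4 * Real.pi) * T l * G l)
    (hb : ∀ l ∈ Icc (0:ℝ) 1, s' l ≤ 2 * Real.pi * T l)
    (hc : s 0 ≤ -G' 0 / (2 * G 0)) :
    (∫ l in (0:ℝ)..1, s l * (G l) ^ 2) ≤ (1/4) * (1 - (G 1) ^ 2) := by
  have hI : uIcc (0:ℝ) 1 = Icc 0 1 := uIcc_of_le zero_le_one
  have hs_le : ∀ l ∈ Icc (0:ℝ) 1, s l ≤ -expansion G G' l / 4 :=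
    le_neg_expansion_div_four hGpos hG'd hG''d hs'd ha hb
      (hc.trans_eq (by unfold expansion; ring))
  have hGc : ContinuousOn G (Icc 0 1) := HasDerivAt.continuousOn hG'd
  have hθc : ContinuousOn (expansion G G') (Icc 0 1) := fun l hl =>
    (hasDerivAt_expansion (hG'd l hl) (hG''d l hl) (hGpos l hl).ne').continuousAt
      |>.continuousWithinAt
  calc (∫ l in (0:ℝ)..1, s l * G l ^ 2)
      ≤ ∫ l in (0:ℝ)..1, -expansion G G' l / 4 * G l ^ 2 := by
        refine integral_mono_on zero_le_one ?_ ?_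
          fun l hl => mul_le_mul_of_nonneg_right (hs_le l hl) (sq_nonneg _)
        · exact ((HasDerivAt.continuousOn hs'd).mul (hGc.pow 2)).intervalIntegrable_of_Icc
            zero_le_one
        · exact ((hθc.neg.div_const 4).mul (hGc.pow 2)).intervalIntegrable_of_Icc
            zero_le_one
    _ = (G 0 ^ 2 - G 1 ^ 2) / 4 :=
        integral_neg_expansion_div_four_mul_sq (fun l hl => (hGpos l (hI ▸ hl)).ne') (hI ▸ hG'd)
          (hI ▸ HasDerivAt.continuousOn hG''d)
    _ = (1/4) * (1 - G 1 ^ 2) := by rw [hG0]; ring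

/-- The generalized covariant entropy bound along a single null generator
derived from the Strominger–Thompson conditions: with `G = √A`, `G(0) = 1`,
conditions (a) `G'' ≤ -4πTG`, (b) `s' ≤ 2πT` and (c) `s(0) ≤ -G'(0)/(2G(0))`
imply `∫₀¹ s G² ≤ (1/4)(1 - G(1)²)`. -/
theorem strominger_thompson_entropy_bound
    (G G' G'' s s' T : ℝ → ℝ)
    (hGpos : ∀ l ∈ Icc (0:ℝ) 1, 0 < G l)
    (hG0 : G 0 = 1)
    (hG'd : ∀ l ∈ Icc (0:ℝ) 1, HasDerivAt G (G' l) l)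
    (hG''d : ∀ l ∈ Icc (0:ℝ) 1, HasDerivAt G' (G'' l) l)
    (hG''cont : ContinuousOn G'' (Icc 0 1))
    (hs'd : ∀ l ∈ Icc (0:ℝ) 1, HasDerivAt s (s' l) l)
    (hs'cont : ContinuousOn s' (Icc 0 1))
    (ha : ∀ l ∈ Icc (0:ℝ) 1, G'' l ≤ -(4 * Real.pi) * T l * G l)
    (hb : ∀ l ∈ Icc (0:ℝ) 1, s' l ≤ 2 * Real.pi * T l)
    (hc : s 0 ≤ -G' 0 / (2 * G 0)) :
    (∫ l in (0:ℝ)..1, s l * (G l) ^ 2) ≤ (1/4) * (1 - (G 1) ^ 2) :=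
  strominger_thompson_entropy_bound_general G G' G'' s s' T hGpos hG0 hG'd hG''d hs'd ha hb hc
end

section
/- For all real β > 0, γ > 0, and T > 0, ∫₀^∞ ω²·log(1 - e^{-γ·ω^β/T}) dω = -(1/β)·(T/γ)^{3/β}·Γ(3/β)·ζ(1 + 3/β), where Γ is the Gamma function and ζ is the Riemann zeta function. -/
/-!
After the substitution `x = ω ^ β` the integral becomes `(1/β) ∫₀^∞ x^(s-1) log(1 - e^(-a x)) dx`
with `s = 3/β` and `a = γ/T`. Expanding `-log(1 - y) = ∑ yⁿ⁺¹/(n+1)` and integrating term by term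
against the Gamma integral `∫₀^∞ x^(s-1) e^(-c x) dx = Γ(s)/cˢ` gives
`-a^(-s) Γ(s) ∑ (n+1)^(-(s+1)) = -a^(-s) Γ(s) ζ(s+1)`. The interchange is legitimate because every
term is nonnegative, so the integrals of the norms are the terms of a convergent `p`-series.
-/

open Set MeasureTheory Real

lemma integrableOn_rpow_sub_one_mul_exp_neg_mul {s c : ℝ} (hs : 0 < s) (hc : 0 < c) :
    IntegrableOn (fun x : ℝ => x ^ (s - 1) * exp (-(c * x))) (Ioi 0) := by
  simpa using integrableOn_rpow_mul_exp_neg_mul_rpow (s := s - 1) (by linarith) one_pos hc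

lemma hasSum_exp_neg_mul_div_eq_neg_log {y : ℝ} (hy : 0 < y) :
    HasSum (fun n : ℕ => exp (-((n + 1) * y)) / (n + 1)) (-log (1 - exp (-y))) := by
  have hlt : |exp (-y)| < 1 := by
    rw [abs_of_pos (exp_pos _), exp_lt_one_iff]
    linarith
  convert hasSum_pow_div_log_of_abs_lt_one hlt using 2 with n
  rw [← exp_nat_mul]
  push_cast
  ring_nf

lemma summable_inv_nat_add_one_rpow {p : ℝ} (hp : 1 < p) :
    Summable fun n : ℕ => ((n + 1 : ℝ) ^ p)⁻¹ := by
  simpa using (summable_nat_add_iff 1).mpr (Real.summable_nat_rpow_inv.mpr hp)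

lemma integral_rpow_sub_one_mul_exp_neg_mul_div {s a : ℝ} (hs : 0 < s) (ha : 0 < a) (n : ℕ) :
    ∫ x in Ioi 0, x ^ (s - 1) * exp (-((n + 1) * a * x)) / (n + 1)
      = a ^ (-s) * Gamma s * ((n + 1 : ℝ) ^ (s + 1))⁻¹ := by
  have hn : (0 : ℝ) < n + 1 := by positivity
  simp_rw [div_eq_mul_inv _ ((n : ℝ) + 1)]
  rw [integral_mul_const, integral_rpow_mul_exp_neg_mul_Ioi hs (by positivity), one_div,
    inv_rpow (by positivity), mul_rpow hn.le ha.le, rpow_add hn, rpow_one, rpow_neg ha.le]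
  field_simp

theorem integral_rpow_sub_one_mul_log_one_sub_exp_neg_mul {s a : ℝ} (hs : 0 < s) (ha : 0 < a) :
    ∫ x in Ioi 0, x ^ (s - 1) * log (1 - exp (-(a * x)))
      = -(a ^ (-s) * Gamma s * ∑' n : ℕ, ((n + 1 : ℝ) ^ (s + 1))⁻¹) := by
  set G : ℕ → ℝ → ℝ := fun n x => x ^ (s - 1) * exp (-((n + 1) * a * x)) / (n + 1)
  have hG_int (n : ℕ) : Integrable (G n) (volume.restrict (Ioi 0)) :=
    (integrableOn_rpow_sub_one_mul_exp_neg_mul hs (by positivity)).div_const _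
  have hG_norm (n : ℕ) : ∫ x in Ioi 0, ‖G n x‖ = ∫ x in Ioi 0, G n x :=
    setIntegral_congr_fun measurableSet_Ioi fun x hx =>
      Real.norm_of_nonneg (by have : 0 < x := hx; positivity)
  have hG_sum (x : ℝ) (hx : 0 < x) :
      HasSum (fun n => G n x) (-(x ^ (s - 1) * log (1 - exp (-(a * x))))) := by
    rw [← mul_neg]
    refine ((hasSum_exp_neg_mul_div_eq_neg_log (mul_pos ha hx)).mul_left _).congr_fun fun n => ?_
    simp only [G]
    ring_nf
  have hsum := hasSum_integral_of_summable_integral_norm hG_int <| by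
    simpa only [hG_norm, G, integral_rpow_sub_one_mul_exp_neg_mul_div hs ha] using
      (summable_inv_nat_add_one_rpow (by linarith : 1 < s + 1)).mul_left (a ^ (-s) * Gamma s)
  simp only [G, integral_rpow_sub_one_mul_exp_neg_mul_div hs ha] at hsum
  calc ∫ x in Ioi 0, x ^ (s - 1) * log (1 - exp (-(a * x)))
      = -∫ x in Ioi 0, ∑' n, G n x := by
        rw [← integral_neg]
        refine setIntegral_congr_fun measurableSet_Ioi fun x hx => ?_
        rw [(hG_sum x hx).tsum_eq, neg_neg]
    _ = -(a ^ (-s) * Gamma s * ∑' n : ℕ, ((n + 1 : ℝ) ^ (s + 1))⁻¹) := by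
        rw [← hsum.tsum_eq, tsum_mul_left]

lemma riemannZeta_ofReal_eq_tsum {s : ℝ} (hs : 1 < s) :
    riemannZeta s = ((∑' n : ℕ, ((n + 1 : ℝ) ^ s)⁻¹ : ℝ) : ℂ) := by
  rw [zeta_eq_tsum_one_div_nat_add_one_cpow (by simpa using hs), Complex.ofReal_tsum]
  refine tsum_congr fun n => ?_
  rw [one_div, Complex.ofReal_inv, Complex.ofReal_cpow (by positivity)]
  push_cast
  rfl

lemma integral_pow_mul_comp_rpow_Ioi (f : ℝ → ℝ) (k : ℕ) {β : ℝ} (hβ : 0 < β) :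
    ∫ ω in Ioi 0, ω ^ k * f (ω ^ β) = 1 / β * ∫ x in Ioi 0, x ^ ((k + 1) / β - 1) * f x := by
  rw [← integral_comp_rpow_Ioi _ (one_div_ne_zero hβ.ne'), ← integral_const_mul]
  refine setIntegral_congr_fun measurableSet_Ioi fun x (hx : 0 < x) => ?_
  rw [smul_eq_mul, abs_of_pos (one_div_pos.mpr hβ), ← rpow_mul hx.le, one_div_mul_cancel hβ.ne',
    rpow_one, ← rpow_natCast, ← rpow_mul hx.le, mul_assoc, ← mul_assoc (x ^ _), ← rpow_add hx]
  congr 3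
  ring

/-- Eq. (26) of the paper (up to the prefactor `TV/2π²`): the free-energy
integral for a Bose gas with dispersion relation `ε = γ ω^β`,
`∫₀^∞ ω² log(1 - e^(-γω^β/T)) dω = -(1/β) (T/γ)^(3/β) Γ(3/β) ζ(1 + 3/β)`. -/
theorem free_energy_integral (β γ T : ℝ) (hβ : 0 < β) (hγ : 0 < γ) (hT : 0 < T) :
    ((∫ ω in Ioi (0:ℝ), ω ^ 2 * Real.log (1 - Real.exp (-(γ * ω ^ β / T))) : ℝ) : ℂ)
      = -((1 / β : ℝ) : ℂ) * (((T / γ) ^ ((3 : ℝ) / β) : ℝ) : ℂ)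
          * (Real.Gamma (3 / β) : ℂ) * riemannZeta (1 + (3 : ℂ) / (β : ℂ)) := by
  have hs : 0 < 3 / β := by positivity
  have hscale : (γ / T) ^ (-(3 / β)) = (T / γ) ^ (3 / β) := by
    rw [rpow_neg (by positivity), ← inv_rpow (by positivity), inv_div]
  have hzeta : 1 + (3 : ℂ) / β = ((3 / β + 1 : ℝ) : ℂ) := by push_cast; ring
  rw [integral_pow_mul_comp_rpow_Ioi (fun x => log (1 - exp (-(γ * x / T)))) 2 hβ]
  simp_rw [mul_div_right_comm γ _ T]
  rw [show ((2 : ℕ) + 1 : ℝ) / β = 3 / β by norm_num,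
    integral_rpow_sub_one_mul_log_one_sub_exp_neg_mul hs (div_pos hγ hT), hscale, hzeta,
    riemannZeta_ofReal_eq_tsum (by linarith)]
  push_cast
  ring
end

section
/- For all real r > 2 and t > 0, (1/(4·(r-2)·t²))·[(-1 + √(3/π))·((r-2)/r)^{1+√3/2}·r + (2 - 2r - √3 - 1/√π)·(t/r)] < 0. -/
/-! Both summands in the bracket are negative: the first because `π > 3` gives `√(3/π) < 1`,
the second because `2 - 2r < 0` for `r > 2`. The prefactor is positive. -/

open Real

lemma Real.sqrt_div_pi_lt_one {a : ℝ} (ha : a < π) : √(a / π) < 1 :=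
  (sqrt_lt' one_pos).2 <| by simpa using (div_lt_one pi_pos).2 ha

/-- Condition (A) for past-directed ingoing light sheets in the scalar field
spacetime: the quantity `s + θ/4` is negative for all `r > 2`, `t > 0`. -/
theorem condition_A_past_ingoing (r t : ℝ) (hr : 2 < r) (ht : 0 < t) :
    (1 / (4 * (r - 2) * t ^ 2)) *
        ((-1 + Real.sqrt (3 / Real.pi)) * ((r - 2) / r) ^ (1 + Real.sqrt 3 / 2) * r
          + (2 - 2 * r - Real.sqrt 3 - 1 / Real.sqrt Real.pi) * (t / r)) < 0 := by
  have hr0 : 0 < r := by linarith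
  have hr2 : 0 < r - 2 := by linarith
  have hfirst : (-1 + √(3 / π)) * ((r - 2) / r) ^ (1 + √3 / 2) * r < 0 := by
    have hcoef : -1 + √(3 / π) < 0 := by linarith [sqrt_div_pi_lt_one pi_gt_three]
    exact mul_neg_of_neg_of_pos
      (mul_neg_of_neg_of_pos hcoef (rpow_pos_of_pos (div_pos hr2 hr0) _)) hr0
  have hsecond : (2 - 2 * r - √3 - 1 / √π) * (t / r) < 0 := by
    have hcoef : 2 - 2 * r - √3 - 1 / √π < 0 := by
      have : 0 ≤ 1 / √π := by positivity
      linarith [sqrt_nonneg 3]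
    exact mul_neg_of_neg_of_pos hcoef (div_pos ht hr0)
  exact mul_neg_of_pos_of_neg (by positivity) (add_neg hfirst hsecond)
end
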